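/- Improved energy estimate, ρ₊ case (Proposition 5.6, first inequality, transcribed to ℂⁿ): Let H⁽⁰⁾, H⁽¹⁾ : [0,1] × ℂⁿ → ℝ be smooth compactly supported Hamiltonians; set θ_t := φ_{H⁽¹⁾}^{1−t} ∘ (φ_{H⁽¹⁾}^1)⁻¹ and Ĥ(t,x) := −H⁽¹⁾(1−t, x) + H⁽⁰⁾(t, θ_t⁻¹(x)). Let ρ₊ be an elongation function of type ρ₊ and let u : ℝ × [0,1] → ℂⁿ be a smooth map solving ∂u/∂τ + i(∂u/∂t − ρ₊(τ)X_{Ĥ_t}(u(τ,t))) = 0 with finite energy E_{(Ĥ,ρ₊)}(u) < ∞. Assume u(τ,·) converges uniformly on [0,1] as τ → +∞ to a continuous path ℓ₊ : [0,1] → ℂⁿ, the improper integral ∫u*ω converges, and ∫_{ℝ×[0,1]} |dĤ_t(u(τ,t))[∂u/∂τ(τ,t)]| dτ dt < ∞. Then ∫u*ω + ∫₀¹ Ĥ(t, ℓ₊(t)) dt ≥ −(E⁻(H⁽⁰⁾) + E⁺(H⁽¹⁾)). -/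

import Mathlib

open MeasureTheory Set Filter

noncomputable section

abbrev CE (n : ℕ) : Type := EuclideanSpace ℂ (Fin n)

/-- The standard symplectic form `ω(v, w) = ⟨i • v, w⟩_ℝ` on `ℂⁿ ≅ ℝ²ⁿ`. -/
def symp {n : ℕ} (v w : CE n) : ℝ := inner (𝕜 := ℝ) ((Complex.I : ℂ) • v) w

/-- The Hamiltonian vector field `X_{H_t}(x) = -i ∇H_t(x)`. -/
def hamVF {n : ℕ} (H : ℝ → CE n → ℝ) (t : ℝ) (x : CE n) : CE n :=
  (-Complex.I : ℂ) • gradient (H t) x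

/-- ∂u/∂τ. -/
def d1 {n : ℕ} (u : ℝ × ℝ → CE n) (p : ℝ × ℝ) : CE n := deriv (fun s => u (s, p.2)) p.1

/-- ∂u/∂t. -/
def d2 {n : ℕ} (u : ℝ × ℝ → CE n) (p : ℝ × ℝ) : CE n := deriv (fun s => u (p.1, s)) p.2

/-- The strip `ℝ × [0,1]`. -/
def strip : Set (ℝ × ℝ) := Set.univ ×ˢ Set.Icc (0 : ℝ) 1

/-- The energy density `|∂u/∂τ|² + |∂u/∂t − ρ(τ) X_{H_t}(u)|²`. -/
def enDensity {n : ℕ} (H : ℝ → CE n → ℝ) (ρ : ℝ → ℝ) (u : ℝ × ℝ → CE n) (p : ℝ × ℝ) : ℝ :=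
  ‖d1 u p‖ ^ 2 + ‖d2 u p - ρ p.1 • hamVF H p.2 (u p)‖ ^ 2

/-- The energy `E_{(H,ρ)}(u)`. -/
def energy {n : ℕ} (H : ℝ → CE n → ℝ) (ρ : ℝ → ℝ) (u : ℝ × ℝ → CE n) : ℝ :=
  (1 / 2) * ∫ p in strip, enDensity H ρ u p

/-- The symplectic area `∫ u*ω`. -/
def area {n : ℕ} (u : ℝ × ℝ → CE n) : ℝ := ∫ p in strip, symp (d1 u p) (d2 u p)

def Eplus {n : ℕ} (H : ℝ → CE n → ℝ) : ℝ := ∫ t in (0:ℝ)..1, ⨆ x : CE n, H t x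
def Eminus {n : ℕ} (H : ℝ → CE n → ℝ) : ℝ := -∫ t in (0:ℝ)..1, ⨅ x : CE n, H t x
def hoferNorm {n : ℕ} (H : ℝ → CE n → ℝ) : ℝ := Eplus H + Eminus H

/-- An elongation function of type `ρ₊`. -/
structure IsElongationPlus (ρ : ℝ → ℝ) : Prop where
  smooth : ContDiff ℝ (⊤ : ℕ∞) ρ
  mono : Monotone ρ
  mem : ∀ τ : ℝ, ρ τ ∈ Set.Icc (0:ℝ) 1
  zero : ∀ τ : ℝ, τ ≤ 0 → ρ τ = 0
  one : ∀ τ : ℝ, 1 ≤ τ → ρ τ = 1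

/-- An elongation function of type `ρ_K`. -/
structure IsElongationK (K : ℝ) (ρ : ℝ → ℝ) : Prop where
  smooth : ContDiff ℝ (⊤ : ℕ∞) ρ
  mem : ∀ τ : ℝ, ρ τ ∈ Set.Icc (0:ℝ) 1
  zero : ∀ τ : ℝ, K ≤ |τ| → ρ τ = 0
  one : ∀ τ : ℝ, |τ| ≤ K - 1 → ρ τ = 1
  incr : ∀ τ ∈ Set.Icc (-K) (-K + 1), 0 ≤ deriv ρ τ
  decr : ∀ τ ∈ Set.Icc (K - 1) K, deriv ρ τ ≤ 0

/-- `u` solves the `ρ`-perturbed Cauchy–Riemann equation on `ℝ × [0,1]`. -/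
def SolvesCR {n : ℕ} (H : ℝ → CE n → ℝ) (ρ : ℝ → ℝ) (u : ℝ × ℝ → CE n) : Prop :=
  ∀ p : ℝ × ℝ, p.2 ∈ Set.Icc (0:ℝ) 1 →
    d1 u p + (Complex.I : ℂ) • (d2 u p - ρ p.1 • hamVF H p.2 (u p)) = 0

/-- `φ` is the Hamiltonian flow of `H`. -/
structure IsHamFlow {n : ℕ} (H : ℝ → CE n → ℝ) (φ : ℝ → CE n ≃ CE n) : Prop where
  init : ∀ x, φ 0 x = x
  isFlow : ∀ t x, HasDerivAt (fun s => φ s x) (hamVF H t (φ t x)) t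
  smooth : ContDiff ℝ (⊤ : ℕ∞) fun p : ℝ × CE n => φ p.1 p.2
  smooth_symm : ContDiff ℝ (⊤ : ℕ∞) fun p : ℝ × CE n => (φ p.1).symm p.2

/-! ### Auxiliary lemmas -/

section Aux

lemma rinner_eq_re {n : ℕ} (v w : CE n) :
    inner (𝕜 := ℝ) v w = Complex.re (inner (𝕜 := ℂ) v w) := by
  simp [PiLp.inner_apply, Complex.re_sum]

lemma rinner_Ismul_negIsmul {n : ℕ} (v g : CE n) :
    inner (𝕜 := ℝ) ((Complex.I : ℂ) • v) ((-Complex.I : ℂ) • g) = -(inner (𝕜 := ℝ) v g) := by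
  rw [rinner_eq_re, rinner_eq_re, inner_smul_left, inner_smul_right]; simp

lemma rinner_Ismul_Ismul {n : ℕ} (v w : CE n) :
    inner (𝕜 := ℝ) ((Complex.I : ℂ) • v) ((Complex.I : ℂ) • w) = inner (𝕜 := ℝ) v w := by
  rw [rinner_eq_re, rinner_eq_re, inner_smul_left, inner_smul_right]; simp

lemma inner_gradient' {n : ℕ} (f : CE n → ℝ) (x v : CE n) :
    inner (𝕜 := ℝ) (gradient f x) v = fderiv ℝ f x v :=
  InnerProductSpace.toDual_symm_apply

lemma key_alg {n : ℕ} (v w g : CE n) (r : ℝ)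
    (h : v + (Complex.I : ℂ) • (w - r • ((-Complex.I : ℂ) • g)) = 0) :
    w - r • ((-Complex.I : ℂ) • g) = (Complex.I : ℂ) • v := by
  set X := w - r • ((-Complex.I : ℂ) • g) with hX
  have h1 : (Complex.I : ℂ) • X = -v := by
    have := eq_neg_of_add_eq_zero_right h
    simpa using this
  calc X = (-Complex.I : ℂ) • ((Complex.I : ℂ) • X) := by
            rw [smul_smul]; simp
    _ = (-Complex.I : ℂ) • (-v) := by rw [h1]
    _ = (Complex.I : ℂ) • v := by simp

lemma key_symp {n : ℕ} (v w g : CE n) (r : ℝ)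
    (h : v + (Complex.I : ℂ) • (w - r • ((-Complex.I : ℂ) • g)) = 0) :
    symp v w = ‖v‖^2 - r * inner (𝕜 := ℝ) g v := by
  have hw : w = (Complex.I : ℂ) • v + r • ((-Complex.I : ℂ) • g) := by
    have := key_alg v w g r h
    rw [sub_eq_iff_eq_add] at this
    rw [this]
  rw [symp, hw, inner_add_right, rinner_Ismul_Ismul, real_inner_self_eq_norm_sq,
    real_inner_smul_right, rinner_Ismul_negIsmul, real_inner_comm]
  ring

lemma key_norm {n : ℕ} (v w g : CE n) (r : ℝ)
    (h : v + (Complex.I : ℂ) • (w - r • ((-Complex.I : ℂ) • g)) = 0) :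
    ‖w - r • ((-Complex.I : ℂ) • g)‖ = ‖v‖ := by
  rw [key_alg v w g r h, norm_smul]
  simp

lemma hasDerivAt_slice1 {n : ℕ} (u : ℝ × ℝ → CE n) (hu : ContDiff ℝ (⊤ : ℕ∞) u) (p : ℝ × ℝ) :
    HasDerivAt (fun s => u (s, p.2)) (d1 u p) p.1 := by
  have hdiff : DifferentiableAt ℝ (fun s : ℝ => u (s, p.2)) p.1 :=
    ((hu.differentiable (by simp)) (p.1, p.2)).comp p.1
      ((differentiableAt_id).prodMk (differentiableAt_const p.2))
  exact hdiff.hasDerivAt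

lemma d1_eq_fderiv {n : ℕ} (u : ℝ × ℝ → CE n) (hu : ContDiff ℝ (⊤ : ℕ∞) u) (p : ℝ × ℝ) :
    d1 u p = fderiv ℝ u p (1, 0) := by
  have h : HasDerivAt (fun s => u (s, p.2)) (fderiv ℝ u p ((1 : ℝ), (0 : ℝ))) p.1 := by
    have h1 : HasDerivAt (fun s : ℝ => (s, p.2)) ((1 : ℝ), (0 : ℝ)) p.1 :=
      (hasDerivAt_id p.1).prodMk (hasDerivAt_const p.1 p.2)
    exact ((hu.differentiable (by simp)) (p.1, p.2)).hasFDerivAt.comp_hasDerivAt p.1 h1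
  exact h.deriv

lemma cont_d1 {n : ℕ} (u : ℝ × ℝ → CE n) (hu : ContDiff ℝ (⊤ : ℕ∞) u) : Continuous (d1 u) := by
  have : d1 u = fun p => fderiv ℝ u p (1, 0) := funext (d1_eq_fderiv u hu)
  rw [this]
  exact (hu.continuous_fderiv (by simp)).clm_apply continuous_const

lemma mono_deriv_nonneg {ρ : ℝ → ℝ} (hm : Monotone ρ) {x : ℝ} (hd : DifferentiableAt ℝ ρ x) :
    0 ≤ deriv ρ x := by
  have h := hd.hasDerivAt
  rw [hasDerivAt_iff_tendsto_slope] at h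
  refine ge_of_tendsto h ?_
  filter_upwards [self_mem_nhdsWithin] with y hy
  have hy' : y ≠ x := hy
  rw [slope_def_field]
  rcases lt_or_gt_of_ne hy' with h1 | h1
  · exact div_nonneg_iff.mpr (Or.inr ⟨by simp [hm h1.le], by linarith⟩)
  · exact div_nonneg (by simp [hm h1.le]) (by linarith)

lemma elong_deriv_zero {ρ : ℝ → ℝ} (hρ : IsElongationPlus ρ) {τ : ℝ} (hτ : 1 ≤ τ) :
    deriv ρ τ = 0 := by
  rcases eq_or_lt_of_le hτ with h | h
  · have hmax : IsLocalMax ρ τ := by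
      apply Eventually.of_forall
      intro y
      rw [← h, hρ.one 1 le_rfl]
      exact (hρ.mem y).2
    exact hmax.deriv_eq_zero
  · have hev : ρ =ᶠ[nhds τ] fun _ => 1 :=
      (eventually_mem_nhds_iff.mpr ((isOpen_Ioi (a := (1:ℝ))).mem_nhds h)).mono
        fun y hy => hρ.one y (le_of_lt (mem_of_mem_nhds hy : y ∈ Ioi 1))
    rw [hev.deriv_eq, deriv_const]

lemma per_slice_integral {ρ : ℝ → ℝ} (hρ : IsElongationPlus ρ) (f f' : ℝ → ℝ)
    (hf : ∀ τ, HasDerivAt f (f' τ) τ) (hf'c : Continuous f')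
    (hint : Integrable (fun τ => ρ τ * f' τ)) (L : ℝ) (hL : Tendsto f atTop (nhds L)) :
    ∫ τ, ρ τ * f' τ = L - ∫ τ in (0:ℝ)..1, deriv ρ τ * f τ := by
  have hρd : Differentiable ℝ ρ := hρ.smooth.differentiable (by simp)
  have hρ'c : Continuous (deriv ρ) := hρ.smooth.continuous_deriv (by simp)
  have hfc : Continuous f := continuous_iff_continuousAt.mpr fun τ => (hf τ).continuousAt
  have h1 : (fun τ => ρ τ * f' τ) = (Ioi (0:ℝ)).indicator (fun τ => ρ τ * f' τ) := by
    funext τ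
    by_cases hτ : τ ∈ Ioi (0:ℝ)
    · rw [Set.indicator_of_mem hτ]
    · rw [Set.indicator_of_notMem hτ, hρ.zero τ (by simpa using hτ), zero_mul]
  have hIoi : IntegrableOn (fun τ => ρ τ * f' τ) (Ioi 0) := hint.integrableOn
  have h2 : Tendsto (fun b => ∫ τ in (0:ℝ)..b, ρ τ * f' τ) atTop
      (nhds (∫ τ in Ioi (0:ℝ), ρ τ * f' τ)) :=
    intervalIntegral_tendsto_integral_Ioi 0 hIoi tendsto_id
  have h3 : ∀ b : ℝ, 1 ≤ b → (∫ τ in (0:ℝ)..b, ρ τ * f' τ)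
      = f b - ∫ τ in (0:ℝ)..1, deriv ρ τ * f τ := by
    intro b hb
    have hparts := intervalIntegral.integral_mul_deriv_eq_deriv_mul (a := 0) (b := b)
      (fun x _ => (hρd x).hasDerivAt) (fun x _ => hf x)
      (hρ'c.intervalIntegrable 0 b) (hf'c.intervalIntegrable 0 b)
    rw [hρ.one b hb, hρ.zero 0 le_rfl] at hparts
    have int1 : IntervalIntegrable (fun τ => deriv ρ τ * f τ) volume 0 1 :=
      (hρ'c.mul hfc).intervalIntegrable 0 1
    have int2 : IntervalIntegrable (fun τ => deriv ρ τ * f τ) volume 1 b :=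
      (hρ'c.mul hfc).intervalIntegrable 1 b
    have hsplit : (∫ τ in (0:ℝ)..1, deriv ρ τ * f τ) + (∫ τ in (1:ℝ)..b, deriv ρ τ * f τ)
        = ∫ τ in (0:ℝ)..b, deriv ρ τ * f τ :=
      intervalIntegral.integral_add_adjacent_intervals int1 int2
    have hz : (∫ τ in (1:ℝ)..b, deriv ρ τ * f τ) = 0 := by
      have : EqOn (fun τ => deriv ρ τ * f τ) (fun _ => (0:ℝ)) (Set.uIcc 1 b) := by
        intro τ hτ
        rw [Set.uIcc_of_le hb] at hτ
        simp [elong_deriv_zero hρ hτ.1]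
      rw [intervalIntegral.integral_congr this, intervalIntegral.integral_const]
      simp
    rw [hparts, ← hsplit, hz]
    ring
  have h4 : Tendsto (fun b => f b - ∫ τ in (0:ℝ)..1, deriv ρ τ * f τ) atTop
      (nhds (L - ∫ τ in (0:ℝ)..1, deriv ρ τ * f τ)) := hL.sub_const _
  have h5 : (∫ τ in Ioi (0:ℝ), ρ τ * f' τ) = L - ∫ τ in (0:ℝ)..1, deriv ρ τ * f τ := by
    refine tendsto_nhds_unique (h2.congr' ?_) h4
    filter_upwards [eventually_ge_atTop (1:ℝ)] with b hb using h3 b hb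
  calc ∫ τ, ρ τ * f' τ = ∫ τ in Ioi (0:ℝ), ρ τ * f' τ := by
        conv_lhs => rw [h1]
        rw [integral_indicator measurableSet_Ioi]
    _ = L - ∫ τ in (0:ℝ)..1, deriv ρ τ * f τ := h5

lemma slice_lower_bound {ρ : ℝ → ℝ} (hρ : IsElongationPlus ρ) (f : ℝ → ℝ)
    (hfc : Continuous f) (c : ℝ) (hc : ∀ τ, c ≤ f τ) :
    c ≤ ∫ τ in (0:ℝ)..1, deriv ρ τ * f τ := by
  have hρd : Differentiable ℝ ρ := hρ.smooth.differentiable (by simp)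
  have hρ'c : Continuous (deriv ρ) := hρ.smooth.continuous_deriv (by simp)
  have h0 : (∫ τ in (0:ℝ)..1, deriv ρ τ) = 1 := by
    rw [intervalIntegral.integral_deriv_eq_sub (fun x _ => hρd x)
      (hρ'c.intervalIntegrable 0 1), hρ.one 1 le_rfl, hρ.zero 0 le_rfl]
    ring
  have hstep : c = ∫ τ in (0:ℝ)..1, deriv ρ τ * c := by
    rw [intervalIntegral.integral_mul_const, h0, one_mul]
  rw [hstep]
  apply intervalIntegral.integral_mono_on (by norm_num)
    ((hρ'c.mul continuous_const).intervalIntegrable 0 1)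
    ((hρ'c.mul hfc).intervalIntegrable 0 1)
  intro τ _
  exact mul_le_mul_of_nonneg_left (hc τ) (mono_deriv_nonneg hρ.mono (hρd τ))

lemma iSup_eq_iSup_seq {n : ℕ} {f : CE n → ℝ} (hf : Continuous f) (hb : BddAbove (range f))
    {d : ℕ → CE n} (hd : DenseRange d) : ⨆ x, f x = ⨆ i, f (d i) := by
  have hb' : BddAbove (range fun i => f (d i)) :=
    hb.mono (range_comp f d ▸ image_subset_range f (range d) |>.trans (by simp))
  apply le_antisymm
  · refine ciSup_le fun x => ?_
    obtain ⟨g, hg1, hg2⟩ := mem_closure_iff_seq_limit.mp (hd x)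
    have hle : ∀ k, f (g k) ≤ ⨆ i, f (d i) := by
      intro k
      obtain ⟨i, hi⟩ := hg1 k
      rw [← hi]
      exact le_ciSup hb' i
    exact le_of_tendsto ((hf.continuousAt.tendsto).comp hg2) (Eventually.of_forall hle)
  · exact ciSup_le fun i => le_ciSup hb (d i)

lemma iInf_eq_iInf_seq {n : ℕ} {f : CE n → ℝ} (hf : Continuous f) (hb : BddBelow (range f))
    {d : ℕ → CE n} (hd : DenseRange d) : ⨅ x, f x = ⨅ i, f (d i) := by
  have hb' : BddBelow (range fun i => f (d i)) :=
    hb.mono (range_comp f d ▸ image_subset_range f (range d) |>.trans (by simp))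
  apply le_antisymm
  · exact le_ciInf fun i => ciInf_le hb (d i)
  · refine le_ciInf fun x => ?_
    obtain ⟨g, hg1, hg2⟩ := mem_closure_iff_seq_limit.mp (hd x)
    have hle : ∀ k, ⨅ i, f (d i) ≤ f (g k) := by
      intro k
      obtain ⟨i, hi⟩ := hg1 k
      rw [← hi]
      exact ciInf_le hb' i
    exact ge_of_tendsto ((hf.continuousAt.tendsto).comp hg2) (Eventually.of_forall hle)

lemma measurable_param_iSup {n : ℕ} {H : ℝ → CE n → ℝ} (hc : Continuous (Function.uncurry H))
    {C : ℝ} (hb : ∀ t x, |H t x| ≤ C) : Measurable fun t => ⨆ x, H t x := by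
  obtain ⟨d, hd⟩ := TopologicalSpace.exists_dense_seq (CE n)
  have he : (fun t => ⨆ x, H t x) = fun t => ⨆ i, H t (d i) := by
    funext t
    exact iSup_eq_iSup_seq (hc.comp (Continuous.prodMk_right t))
      ⟨C, by rintro y ⟨x, rfl⟩; exact (abs_le.mp (hb t x)).2⟩ hd
  rw [he]
  exact Measurable.iSup fun i =>
    (hc.comp (continuous_id.prodMk continuous_const)).measurable

lemma measurable_param_iInf {n : ℕ} {H : ℝ → CE n → ℝ} (hc : Continuous (Function.uncurry H))
    {C : ℝ} (hb : ∀ t x, |H t x| ≤ C) : Measurable fun t => ⨅ x, H t x := by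
  obtain ⟨d, hd⟩ := TopologicalSpace.exists_dense_seq (CE n)
  have he : (fun t => ⨅ x, H t x) = fun t => ⨅ i, H t (d i) := by
    funext t
    exact iInf_eq_iInf_seq (hc.comp (Continuous.prodMk_right t))
      ⟨-C, by rintro y ⟨x, rfl⟩; exact (abs_le.mp (hb t x)).1⟩ hd
  rw [he]
  exact Measurable.iInf fun i =>
    (hc.comp (continuous_id.prodMk continuous_const)).measurable

end Aux

/-- Proposition 5.6, first inequality: improved energy estimate, `ρ₊` case.
For finite-energy solutions of the `ρ₊`-perturbed Cauchy–Riemann equation for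
`Ĥ(t,x) = −H⁽¹⁾(1−t,x) + H⁽⁰⁾(t, θ_t⁻¹(x))`,
`∫u*ω + ∫₀¹ Ĥ(t, ℓ₊(t)) dt ≥ −(E⁻(H⁽⁰⁾) + E⁺(H⁽¹⁾))`. -/
theorem improved_estimate_rho_plus {n : ℕ} (H0 H1 : ℝ → CE n → ℝ) (φ1 : ℝ → CE n ≃ CE n)
    (hH0smooth : ContDiff ℝ (⊤ : ℕ∞) (Function.uncurry H0))
    (hH0supp : HasCompactSupport (Function.uncurry H0))
    (hH1smooth : ContDiff ℝ (⊤ : ℕ∞) (Function.uncurry H1))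
    (hH1supp : HasCompactSupport (Function.uncurry H1))
    (hφ1 : IsHamFlow H1 φ1)
    (θinv : ℝ → CE n → CE n)
    (hθinv : θinv = fun t x => φ1 1 ((φ1 (1 - t)).symm x))
    (Hhat : ℝ → CE n → ℝ)
    (hHhat : Hhat = fun t x => -H1 (1 - t) x + H0 t (θinv t x))
    (ρ : ℝ → ℝ) (hρ : IsElongationPlus ρ)
    (u : ℝ × ℝ → CE n) (ℓ : ℝ → CE n)
    (hu : ContDiff ℝ (⊤ : ℕ∞) u)
    (hpde : SolvesCR Hhat ρ u)
    (hfin : IntegrableOn (enDensity Hhat ρ u) strip)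
    (harea : IntegrableOn (fun p => symp (d1 u p) (d2 u p)) strip)
    (hdH : IntegrableOn (fun p => fderiv ℝ (Hhat p.2) (u p) (d1 u p)) strip)
    (hℓ : Continuous ℓ)
    (hconv : TendstoUniformlyOn (fun τ t => u (τ, t)) ℓ Filter.atTop (Set.Icc 0 1)) :
    area u + (∫ t in (0:ℝ)..1, Hhat t (ℓ t)) ≥ -(Eminus H0 + Eplus H1) := by
  classical
  set ν : Measure ℝ := volume.restrict (Icc (0:ℝ) 1) with hν
  have hstripm : MeasurableSet strip := MeasurableSet.univ.prod measurableSet_Icc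
  -- measure identity
  have hmeq : (volume : Measure (ℝ × ℝ)).restrict strip = (volume : Measure ℝ).prod ν := by
    rw [hν, ← Measure.restrict_univ (μ := (volume : Measure ℝ)), Measure.prod_restrict,
      Measure.restrict_univ, strip, Measure.volume_eq_prod]
  -- smoothness of Hhat
  have hθc : ContDiff ℝ (⊤ : ℕ∞) (fun p : ℝ × CE n => θinv p.1 p.2) := by
    rw [hθinv]
    have h1 : ContDiff ℝ (⊤ : ℕ∞) (fun p : ℝ × CE n => (φ1 (1 - p.1)).symm p.2) :=
      hφ1.smooth_symm.comp ((contDiff_const.sub contDiff_fst).prodMk contDiff_snd)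
    exact (hφ1.smooth.comp (contDiff_const.prodMk contDiff_id)).comp h1
  have hHhatc : ContDiff ℝ (⊤ : ℕ∞) (Function.uncurry Hhat) := by
    have he : Function.uncurry Hhat
        = fun p : ℝ × CE n => -H1 (1 - p.1) p.2 + H0 p.1 (θinv p.1 p.2) := by
      rw [hHhat]; rfl
    rw [he]
    exact ((hH1smooth.comp ((contDiff_const.sub contDiff_fst).prodMk contDiff_snd)).neg).add
      (hH0smooth.comp (contDiff_fst.prodMk hθc))
  have hHq : Continuous (Function.uncurry Hhat) := hHhatc.continuous
  have hHt : ∀ t, ContDiff ℝ (⊤ : ℕ∞) (Hhat t) :=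
    fun t => hHhatc.comp (contDiff_const.prodMk contDiff_id)
  -- bounds
  obtain ⟨C0, hC0⟩ := hH0smooth.continuous.bounded_above_of_compact_support hH0supp
  obtain ⟨C1, hC1⟩ := hH1smooth.continuous.bounded_above_of_compact_support hH1supp
  have hC0' : ∀ t x, |H0 t x| ≤ C0 := fun t x => by
    simpa [Real.norm_eq_abs] using hC0 (t, x)
  have hC1' : ∀ t x, |H1 t x| ≤ C1 := fun t x => by
    simpa [Real.norm_eq_abs] using hC1 (t, x)
  have hbdd0 : ∀ t, BddBelow (range (H0 t)) :=
    fun t => ⟨-C0, by rintro y ⟨x, rfl⟩; exact (abs_le.mp (hC0' t x)).1⟩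
  have hbdd1 : ∀ t, BddAbove (range (H1 t)) :=
    fun t => ⟨C1, by rintro y ⟨x, rfl⟩; exact (abs_le.mp (hC1' t x)).2⟩
  -- the integrand F
  set G : ℝ × ℝ → ℝ := fun p => fderiv ℝ (Hhat p.2) (u p) (d1 u p) with hG
  set F : ℝ × ℝ → ℝ := fun p => ρ p.1 * G p with hF
  have hρc : Continuous ρ := hρ.smooth.continuous
  have hFint : IntegrableOn F strip := by
    refine Integrable.mono hdH ?_ ?_
    · exact ((hρc.comp continuous_fst).aestronglyMeasurable).mul hdH.aestronglyMeasurable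
    · refine Eventually.of_forall fun p => ?_
      rw [hF]
      simp only [Real.norm_eq_abs, abs_mul]
      have h1 : |ρ p.1| ≤ 1 := by
        rw [abs_of_nonneg (hρ.mem p.1).1]; exact (hρ.mem p.1).2
      calc |ρ p.1| * |G p| ≤ 1 * |G p| :=
            mul_le_mul_of_nonneg_right h1 (abs_nonneg _)
        _ = |G p| := one_mul _
  -- pointwise identities on the strip
  have hkey : EqOn (fun p => symp (d1 u p) (d2 u p)) (fun p => ‖d1 u p‖^2 - F p) strip := by
    intro p hp
    have hp2 : p.2 ∈ Icc (0:ℝ) 1 := hp.2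
    have hpde' := hpde p hp2
    simp only [hamVF] at hpde'
    have h := key_symp (d1 u p) (d2 u p) (gradient (Hhat p.2) (u p)) (ρ p.1) hpde'
    rw [inner_gradient'] at h
    simpa only [hF, hG] using h
  have hnorm : EqOn (enDensity Hhat ρ u) (fun p => 2 * ‖d1 u p‖^2) strip := by
    intro p hp
    have hpde' := hpde p hp.2
    simp only [hamVF] at hpde'
    have h := key_norm (d1 u p) (d2 u p) (gradient (Hhat p.2) (u p)) (ρ p.1) hpde'
    simp only [enDensity, hamVF]
    rw [h]
    ring
  have hI2 : IntegrableOn (fun p => 2 * ‖d1 u p‖^2) strip := hfin.congr_fun hnorm hstripm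
  have hI1int : IntegrableOn (fun p => ‖d1 u p‖^2) strip := by
    have h : IntegrableOn (fun p => 2⁻¹ * (2 * ‖d1 u p‖^2)) strip := hI2.const_mul (2⁻¹ : ℝ)
    exact h.congr_fun (fun p _ => by ring) hstripm
  have harea' : area u = (∫ p in strip, ‖d1 u p‖^2) - ∫ p in strip, F p := by
    rw [area, setIntegral_congr_fun hstripm hkey, integral_sub hI1int hFint]
  -- Fubini
  have hFint' : Integrable F ((volume : Measure ℝ).prod ν) := by
    have := hFint
    rwa [IntegrableOn, hmeq] at this
  have hfub : (∫ p in strip, F p) = ∫ t, (∫ τ, F (τ, t)) ∂ν := by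
    show (∫ p, F p ∂(volume.restrict strip)) = _
    rw [hmeq]
    exact integral_prod_symm F hFint'
  have hslice := hFint'.prod_left_ae
  have hinner_int : Integrable (fun t => ∫ τ, F (τ, t)) ν := hFint'.integral_prod_right
  -- per-slice computation
  set B : ℝ → ℝ := fun t => ∫ τ in (0:ℝ)..1, deriv ρ τ * Hhat t (u (τ, t)) with hB
  have hucont : ∀ t, Continuous fun τ => u (τ, t) :=
    fun t => hu.continuous.comp (continuous_id.prodMk continuous_const)
  have hslicederiv : ∀ t : ℝ, ∀ τ : ℝ,
      HasDerivAt (fun s => Hhat t (u (s, t))) (G (τ, t)) τ := by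
    intro t τ
    have h1 := hasDerivAt_slice1 u hu (τ, t)
    have h2 : HasFDerivAt (Hhat t) (fderiv ℝ (Hhat t) (u (τ, t))) (u (τ, t)) :=
      (((hHt t).differentiable (by simp)) (u (τ, t))).hasFDerivAt
    exact h2.comp_hasDerivAt τ h1
  have hGcont : ∀ t, Continuous fun τ => G (τ, t) := by
    intro t
    refine Continuous.clm_apply ?_ ?_
    · exact ((hHt t).continuous_fderiv (by simp)).comp (hucont t)
    · exact (cont_d1 u hu).comp (continuous_id.prodMk continuous_const)
  have hBae : ∀ᵐ t ∂ν, (∫ τ, F (τ, t)) = Hhat t (ℓ t) - B t := by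
    filter_upwards [hslice, ae_restrict_mem measurableSet_Icc] with t hint ht
    have hL : Tendsto (fun τ => Hhat t (u (τ, t))) atTop (nhds (Hhat t (ℓ t))) :=
      ((hHt t).continuous.continuousAt.tendsto).comp (hconv.tendsto_at ht)
    exact per_slice_integral hρ (fun τ => Hhat t (u (τ, t))) (fun τ => G (τ, t))
      (hslicederiv t) (hGcont t) hint (Hhat t (ℓ t)) hL
  have hA_cont : Continuous fun t => Hhat t (ℓ t) :=
    hHq.comp (continuous_id.prodMk hℓ)
  have hA_int : Integrable (fun t => Hhat t (ℓ t)) ν := hA_cont.integrableOn_Icc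
  have hB_int : Integrable B ν := by
    refine (hA_int.sub hinner_int).congr ?_
    filter_upwards [hBae] with t ht
    show Hhat t (ℓ t) - (∫ τ, F (τ, t)) = B t
    rw [ht]; ring
  have hsplit : (∫ t, (∫ τ, F (τ, t)) ∂ν) = (∫ t, Hhat t (ℓ t) ∂ν) - ∫ t, B t ∂ν := by
    rw [integral_congr_ae hBae, integral_sub hA_int hB_int]
  -- lower bound for B
  set c : ℝ → ℝ := fun t => (⨅ x, H0 t x) - ⨆ x, H1 (1 - t) x with hc
  have hHhat_ge : ∀ t y, c t ≤ Hhat t y := by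
    intro t y
    have h1 : H1 (1 - t) y ≤ ⨆ x, H1 (1 - t) x := le_ciSup (hbdd1 (1 - t)) y
    have h2 : (⨅ x, H0 t x) ≤ H0 t (θinv t y) := ciInf_le (hbdd0 t) (θinv t y)
    have he : Hhat t y = -H1 (1 - t) y + H0 t (θinv t y) := by rw [hHhat]
    rw [he]
    simp only [hc]
    linarith
  have hBge : ∀ t, c t ≤ B t := by
    intro t
    exact slice_lower_bound hρ (fun τ => Hhat t (u (τ, t)))
      (hHq.comp ((continuous_const.prodMk (hucont t)))) (c t) (fun τ => hHhat_ge t (u (τ, t)))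
  -- integrability of c
  have hc_meas : Measurable c := by
    refine Measurable.sub (measurable_param_iInf hH0smooth.continuous hC0') ?_
    exact (measurable_param_iSup hH1smooth.continuous hC1').comp
      (measurable_const.sub measurable_id)
  have hinf_bdd : ∀ t, |⨅ x, H0 t x| ≤ C0 := by
    intro t
    rw [abs_le]
    constructor
    · exact le_ciInf fun x => (abs_le.mp (hC0' t x)).1
    · exact le_trans (ciInf_le (hbdd0 t) 0) (abs_le.mp (hC0' t 0)).2
  have hsup_bdd : ∀ t, |⨆ x, H1 t x| ≤ C1 := by
    intro t
    rw [abs_le]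
    constructor
    · exact le_trans (abs_le.mp (hC1' t 0)).1 (le_ciSup (hbdd1 t) 0)
    · exact ciSup_le fun x => (abs_le.mp (hC1' t x)).2
  haveI : IsFiniteMeasure ν := by
    constructor
    rw [hν, Measure.restrict_apply_univ]
    exact measure_Icc_lt_top
  have hc_int : Integrable c ν := by
    refine (integrable_const (C0 + C1)).mono' (hc_meas.aestronglyMeasurable) ?_
    refine Eventually.of_forall fun t => ?_
    rw [Real.norm_eq_abs, hc]
    calc |(⨅ x, H0 t x) - ⨆ x, H1 (1 - t) x| ≤ |⨅ x, H0 t x| + |⨆ x, H1 (1 - t) x| :=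
          abs_sub _ _
      _ ≤ C0 + C1 := add_le_add (hinf_bdd t) (hsup_bdd (1 - t))
  have hBc : (∫ t, c t ∂ν) ≤ ∫ t, B t ∂ν :=
    setIntegral_mono_on hc_int hB_int measurableSet_Icc (fun t _ => hBge t)
  -- compute ∫ c
  have hi0_int : Integrable (fun t => ⨅ x, H0 t x) ν := by
    refine (integrable_const C0).mono'
      ((measurable_param_iInf hH0smooth.continuous hC0').aestronglyMeasurable) ?_
    exact Eventually.of_forall fun t => by rw [Real.norm_eq_abs]; exact hinf_bdd t
  have hs1_int : Integrable (fun t => ⨆ x, H1 (1 - t) x) ν := by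
    refine (integrable_const C1).mono'
      (((measurable_param_iSup hH1smooth.continuous hC1').comp
        (measurable_const.sub measurable_id)).aestronglyMeasurable) ?_
    exact Eventually.of_forall fun t => by rw [Real.norm_eq_abs]; exact hsup_bdd (1 - t)
  have hIcc_ii : ∀ f : ℝ → ℝ, (∫ t, f t ∂ν) = ∫ t in (0:ℝ)..1, f t := by
    intro f
    rw [intervalIntegral.integral_of_le zero_le_one, hν, ← integral_Icc_eq_integral_Ioc]
  have hcint_eq : (∫ t, c t ∂ν) = -(Eminus H0 + Eplus H1) := by
    have h1 : (∫ t, c t ∂ν) = (∫ t, (⨅ x, H0 t x) ∂ν) - ∫ t, (⨆ x, H1 (1 - t) x) ∂ν := by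
      rw [hc, integral_sub hi0_int hs1_int]
    have h2 : (∫ t, (⨅ x, H0 t x) ∂ν) = -Eminus H0 := by
      rw [hIcc_ii, Eminus, neg_neg]
    have h3 : (∫ t, (⨆ x, H1 (1 - t) x) ∂ν) = Eplus H1 := by
      rw [hIcc_ii]
      have := intervalIntegral.integral_comp_sub_left (a := (0:ℝ)) (b := (1:ℝ))
        (fun s => ⨆ x, H1 s x) 1
      rw [this]
      norm_num [Eplus]
    rw [h1, h2, h3]
    ring
  -- nonnegativity of the energy term
  have hI1nonneg : 0 ≤ ∫ p in strip, ‖d1 u p‖^2 :=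
    setIntegral_nonneg hstripm fun p _ => sq_nonneg _
  -- conclusion
  have hAeq : (∫ t in (0:ℝ)..1, Hhat t (ℓ t)) = ∫ t, Hhat t (ℓ t) ∂ν := (hIcc_ii _).symm
  rw [ge_iff_le, ← hcint_eq]
  have : area u + (∫ t in (0:ℝ)..1, Hhat t (ℓ t))
      = (∫ p in strip, ‖d1 u p‖^2) + ∫ t, B t ∂ν := by
    rw [harea', hAeq, hfub, hsplit]
    ring
  rw [this]
  linarith [hBc]

end
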